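/- Let Γ be the adjacency matrix of a finite simple graph H on n vertices and let Γ(x) = Σ_{1≤i<j≤n} Γ_{ij} x_i x_j. Then the parity function of the graph state associated to H, written in terms of the standard generators g_i = X_i Π_{j ∈ N(i)} Z_j, equals c_H(x) ≡ Σ_{i ∈ V} Σ_{j<k, j,k ∈ N(i)} x_i x_j x_k (mod 2), i.e., the quadratic contributions cancel by symmetry of Γ. -/

import Mathlib

/-- The 2×2 Pauli `X` matrix, indexed by `ZMod 2`. -/
def Xmat : Matrix (ZMod 2) (ZMod 2) ℂ := Matrix.of fun a b => if a = b + 1 then 1 else 0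

/-- The 2×2 Pauli `Z` matrix, indexed by `ZMod 2`. -/
def Zmat : Matrix (ZMod 2) (ZMod 2) ℂ := Matrix.of fun a b => if a = b then (-1 : ℂ) ^ b.val else 0

/-- The single-site Pauli operator `i^{xz}·X^x·Z^z` (equal to `X`, `Y`, `Z`, or
`1` according to the bits `(x,z)`). -/
noncomputable def pauliSite (xb zb : ZMod 2) : Matrix (ZMod 2) (ZMod 2) ℂ :=
  (Complex.I ^ (xb.val * zb.val)) • (Xmat ^ xb.val * Zmat ^ zb.val)

/-- The `n`-qubit Pauli operator `σ_v` for `v = (x|z) ∈ F_2^{2n}`. -/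
noncomputable def pauli (n : ℕ) (x z : Fin n → ZMod 2) :
    Matrix (Fin n → ZMod 2) (Fin n → ZMod 2) ℂ :=
  Matrix.of fun a b => ∏ j, pauliSite (x j) (z j) (a j) (b j)

lemma pauliSite_apply (x z a b : ZMod 2) :
    pauliSite x z a b = Complex.I ^ (x.val * z.val) *
      (if a = b + x then (-1:ℂ) ^ (z.val * b.val) else 0) := by
  rcases (by decide : ∀ u : ZMod 2, u = 0 ∨ u = 1) x with rfl | rfl <;>
  rcases (by decide : ∀ u : ZMod 2, u = 0 ∨ u = 1) z with rfl | rfl <;>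
  rcases (by decide : ∀ u : ZMod 2, u = 0 ∨ u = 1) a with rfl | rfl <;>
  rcases (by decide : ∀ u : ZMod 2, u = 0 ∨ u = 1) b with rfl | rfl <;>
  · simp (config := {decide := true}) [pauliSite, Xmat, Zmat, Matrix.mul_apply,
      Fin.sum_univ_two, ZMod.val_one, ZMod.val_zero, pow_one, pow_zero, Matrix.one_apply]
    try rw [if_pos (by decide : (0:ZMod 2) = 1 + 1)]
    try rw [if_pos (by decide : (0:ZMod 2) = 1 + 1)]

/-- signed shift matrix -/
def Dmat (n : ℕ) (x : Fin n → ZMod 2) (s : (Fin n → ZMod 2) → ℂ) :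
    Matrix (Fin n → ZMod 2) (Fin n → ZMod 2) ℂ :=
  Matrix.of fun a b => if a = b + x then s b else 0

lemma pauli_eq_Dmat (n : ℕ) (x z : Fin n → ZMod 2) :
    pauli n x z = Dmat n x
      (fun b => (∏ j, Complex.I ^ ((x j).val * (z j).val)) *
        ∏ j, (-1:ℂ) ^ ((z j).val * (b j).val)) := by
  ext a b
  simp only [pauli, Dmat, Matrix.of_apply, pauliSite_apply]
  rw [Finset.prod_mul_distrib]
  by_cases h : a = b + x
  · rw [if_pos h]
    congr 1
    apply Finset.prod_congr rfl
    intro j _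
    rw [if_pos (by rw [h]; rfl)]
  · rw [if_neg h]
    have : ∃ j, a j ≠ b j + x j := by
      by_contra hc
      push_neg at hc
      exact h (funext hc)
    obtain ⟨j, hj⟩ := this
    exact mul_eq_zero_of_right _ (Finset.prod_eq_zero (Finset.mem_univ j) (by rw [if_neg hj]))

lemma Dmat_mul (n : ℕ) (x x' : Fin n → ZMod 2) (s s' : (Fin n → ZMod 2) → ℂ) :
    Dmat n x s * Dmat n x' s' = Dmat n (x + x') (fun b => s (b + x') * s' b) := by
  ext a b
  simp only [Dmat, Matrix.mul_apply, Matrix.of_apply]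
  rw [Finset.sum_eq_single (b + x')]
  · by_cases h : a = b + (x + x')
    · rw [if_pos h, if_pos (by rw [h]; funext j; simp [add_comm, add_assoc, add_left_comm]), if_pos rfl]
    · rw [if_neg h, if_neg (fun hc => h (by rw [hc]; funext j; simp [add_comm, add_assoc, add_left_comm])), if_pos rfl, zero_mul]
  · intro c _ hc
    rw [if_neg hc, mul_zero]
  · intro h; exact absurd (Finset.mem_univ _) h

lemma Dmat_one (n : ℕ) : Dmat n 0 (fun _ => 1) = 1 := by
  ext a b
  simp [Dmat, Matrix.one_apply, eq_comm]

lemma Dmat_smul (n : ℕ) (c : ℂ) (x : Fin n → ZMod 2) (s : (Fin n → ZMod 2) → ℂ) :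
    c • Dmat n x s = Dmat n x (fun b => c * s b) := by
  ext a b
  simp [Dmat, Matrix.smul_apply, mul_ite]

/-- sign product for a list of (x, sign) pairs -/
def signProd (n : ℕ) : List ((Fin n → ZMod 2) × ((Fin n → ZMod 2) → ℂ)) →
    (Fin n → ZMod 2) → ℂ
  | [] => fun _ => 1
  | p :: t => fun b => p.2 (b + (t.map Prod.fst).sum) * signProd n t b

lemma Dmat_list_prod (n : ℕ) (l : List ((Fin n → ZMod 2) × ((Fin n → ZMod 2) → ℂ))) :
    (l.map fun p => Dmat n p.1 p.2).prod = Dmat n (l.map Prod.fst).sum (signProd n l) := by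
  induction l with
  | nil => simp [signProd, Dmat_one]
  | cons p t ih =>
      simp only [List.map_cons, List.prod_cons, List.sum_cons, ih, Dmat_mul, signProd]

lemma signProd_ofFn (n : ℕ) : ∀ (m : ℕ)
    (v : Fin m → (Fin n → ZMod 2) × ((Fin n → ZMod 2) → ℂ)) (b : Fin n → ZMod 2),
    signProd n (List.ofFn v) b = ∏ i, (v i).2 (b + ∑ k ∈ Finset.Ioi i, (v k).1)
  | 0, v, b => by simp [signProd]
  | (m+1), v, b => by
      rw [List.ofFn_succ]
      show (v 0).2 (b + ((List.ofFn fun i => v i.succ).map Prod.fst).sum) *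
        signProd n (List.ofFn fun i => v i.succ) b = _
      rw [signProd_ofFn n m (fun i => v i.succ) b, Fin.prod_univ_succ]
      congr 1
      · rw [Fin.sum_Ioi_zero, List.map_ofFn, List.sum_ofFn]
        rfl
      · apply Finset.prod_congr rfl
        intro i _
        rw [Fin.sum_Ioi_succ]


lemma zmod2_cases : ∀ u : ZMod 2, u = 0 ∨ u = 1 := by decide

noncomputable def chi (u : ZMod 2) : ℂ := (-1) ^ u.val

lemma chi_zero : chi 0 = 1 := by simp [chi]

lemma chi_add (u v : ZMod 2) : chi (u + v) = chi u * chi v := by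
  rcases zmod2_cases u with h | h <;> rcases zmod2_cases v with h' | h' <;>
    subst h <;> subst h' <;>
    norm_num [chi, show ((1 : ZMod 2) + 1) = 0 by decide, show (2 : ZMod 2) = 0 by decide, show (2 : ZMod 2).val = 0 by decide,
      show (0 : ZMod 2).val = 0 from rfl, show (1 : ZMod 2).val = 1 by decide]

lemma chi_sum {ι : Type*} (s : Finset ι) (f : ι → ZMod 2) :
    chi (∑ i ∈ s, f i) = ∏ i ∈ s, chi (f i) := by
  classical
  induction s using Finset.induction_on with
  | empty => simp [chi_zero]
  | insert _ _ h ih => rw [Finset.sum_insert h, Finset.prod_insert h, chi_add, ih]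

lemma zmod2_val_mul : ∀ u v : ZMod 2, (u * v).val = u.val * v.val := by decide

lemma I_pow_mod (m : ℕ) : Complex.I ^ m = Complex.I ^ (m % 4) := by
  conv_lhs => rw [← Nat.div_add_mod m 4]
  rw [pow_add, pow_mul, Complex.I_pow_four, one_pow, one_mul]

lemma sq_modeq (d : ℕ) : d % 2 ≡ d ^ 2 [MOD 4] := by
  rcases Nat.even_or_odd d with ⟨m, rfl⟩ | ⟨m, rfl⟩
  · have h : (m + m) ^ 2 = 4 * (m * m) := by ring
    unfold Nat.ModEq; omega
  · have h : (2 * m + 1) ^ 2 = 4 * (m * m + m) + 1 := by ring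
    unfold Nat.ModEq; omega

lemma modEq_sum {ι : Type*} (s : Finset ι) (f g : ι → ℕ) (m : ℕ)
    (h : ∀ i ∈ s, f i ≡ g i [MOD m]) : ∑ i ∈ s, f i ≡ ∑ i ∈ s, g i [MOD m] := by
  classical
  induction s using Finset.induction_on with
  | empty => rfl
  | insert _ _ hnot ih =>
      rw [Finset.sum_insert hnot, Finset.sum_insert hnot]
      exact Nat.ModEq.add (h _ (Finset.mem_insert_self _ _))
        (ih fun i hi => h i (Finset.mem_insert_of_mem hi))

lemma sum_sum_split {n : ℕ} (f : Fin n → Fin n → ℕ) (hsym : ∀ i j, f i j = f j i) :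
    ∑ i, ∑ j, f i j
      = (∑ i, f i i) + 2 * ∑ i, ∑ j, if i < j then f i j else 0 := by
  have key : ∀ i j : Fin n, f i j =
      (if i < j then f i j else 0) + (if j < i then f i j else 0) +
        (if i = j then f i j else 0) := by
    intro i j
    rcases lt_trichotomy i j with h | h | h
    · simp [h, asymm h, ne_of_lt h]
    · simp [h, lt_irrefl]
    · simp [h, asymm h, (ne_of_lt h).symm]
  calc ∑ i, ∑ j, f i j
      = ∑ i, ∑ j, ((if i < j then f i j else 0) + (if j < i then f i j else 0) +
          (if i = j then f i j else 0)) := by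
        exact Finset.sum_congr rfl fun i _ => Finset.sum_congr rfl fun j _ => key i j
    _ = (∑ i, ∑ j, if i < j then f i j else 0) + (∑ i, ∑ j, if j < i then f i j else 0)
          + ∑ i, ∑ j, if i = j then f i j else 0 := by
        simp [Finset.sum_add_distrib]
    _ = (∑ i, f i i) + 2 * ∑ i, ∑ j, if i < j then f i j else 0 := by
        have h1 : (∑ i, ∑ j, if j < i then f i j else 0)
            = ∑ i, ∑ j, if i < j then f i j else 0 := by
          rw [Finset.sum_comm]
          exact Finset.sum_congr rfl fun i _ => Finset.sum_congr rfl fun j _ => by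
            rw [hsym]
        have h2 : (∑ i : Fin n, ∑ j, if i = j then f i j else 0) = ∑ i, f i i := by
          exact Finset.sum_congr rfl fun i _ => by simp
        rw [h1, h2]; ring

lemma bits_sq {n : ℕ} (b : Fin n → ℕ) (hb : ∀ i, b i ≤ 1) :
    (∑ i, b i) ^ 2 = (∑ i, b i) + 2 * ∑ i, ∑ j, if i < j then b i * b j else 0 := by
  rw [sq, Finset.sum_mul_sum]
  rw [sum_sum_split (fun i j => b i * b j) (fun i j => Nat.mul_comm _ _)]
  congr 1
  exact Finset.sum_congr rfl fun i _ => by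
    rcases Nat.le_one_iff_eq_zero_or_eq_one.1 (hb i) with h | h <;> simp [h]

lemma core (n : ℕ) (zr : Fin n → Fin n → ZMod 2) (hsym : ∀ i j, zr i j = zr j i)
    (hdiag : ∀ i, zr i i = 0) (x : Fin n → ZMod 2) :
    Complex.I ^ (∑ j, (x j).val * (∑ i, x i * zr i j).val)
      = (-1 : ℂ) ^ (((∑ i, ∑ j, ∑ k, if j < k then x i * (x j * zr i j) * (x k * zr i k) else 0)
          + ∑ i, ∑ j, if i < j then x i * zr i j * x j else 0 : ZMod 2)).val := by
  set a : Fin n → ℕ := fun i => (x i).val with ha_def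
  set γ : Fin n → Fin n → ℕ := fun i j => (zr i j).val with hγ_def
  have ha : ∀ i, a i ≤ 1 := fun i => by
    simp only [ha_def]; have := ZMod.val_lt (x i); omega
  have hγ : ∀ i j, γ i j ≤ 1 := fun i j => by
    simp only [hγ_def]; have := ZMod.val_lt (zr i j); omega
  have hγsym : ∀ i j, γ i j = γ j i := fun i j => by simp [hγ_def, hsym i j]
  have hγdiag : ∀ i, γ i i = 0 := fun i => by simp [hγ_def, hdiag i]
  have hback : ∀ i, ((a i : ℕ) : ZMod 2) = x i := fun i => by
    simp [ha_def, ZMod.natCast_val, ZMod.cast_id]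
  have hγback : ∀ i j, ((γ i j : ℕ) : ZMod 2) = zr i j := fun i j => by
    simp [hγ_def, ZMod.natCast_val, ZMod.cast_id]
  set d : Fin n → ℕ := fun j => ∑ i, a i * γ i j with hd_def
  have hZ : ∀ j, (∑ i, x i * zr i j) = ((d j : ℕ) : ZMod 2) := by
    intro j
    rw [hd_def]; push_cast [hback, hγback]; rfl
  have hZv : ∀ j, (∑ i, x i * zr i j).val = d j % 2 := by
    intro j; rw [hZ j, ZMod.val_natCast]
  set c : Fin n → ℕ := fun j => ∑ i, ∑ k, if i < k then (a i * γ i j) * (a k * γ k j) else 0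
    with hc_def
  set Cn : ℕ := ∑ j, a j * c j with hCn_def
  set Qn : ℕ := ∑ i, ∑ j, if i < j then a i * γ i j * a j else 0 with hQn_def
  have step1 : (∑ j, a j * (d j % 2)) ≡ (∑ j, a j * d j) + 2 * Cn [MOD 4] := by
    have per : ∀ j : Fin n, a j * (d j % 2) ≡ a j * d j + 2 * (a j * c j) [MOD 4] := by
      intro j
      have hsq : d j ^ 2 = d j + 2 * c j := by
        rw [hd_def, hc_def]
        exact bits_sq (fun i => a i * γ i j)
          (fun i => by simpa using Nat.mul_le_mul (ha i) (hγ i j))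
      rcases Nat.le_one_iff_eq_zero_or_eq_one.1 (ha j) with h | h
      · simp [h, Nat.ModEq]
      · rw [h]; simp only [one_mul]
        calc d j % 2 ≡ d j ^ 2 [MOD 4] := sq_modeq (d j)
          _ = d j + 2 * c j := hsq
    calc (∑ j, a j * (d j % 2)) ≡ ∑ j, (a j * d j + 2 * (a j * c j)) [MOD 4] :=
          modEq_sum _ _ _ _ (fun j _ => per j)
      _ = (∑ j, a j * d j) + 2 * Cn := by
          rw [Finset.sum_add_distrib, ← Finset.mul_sum, hCn_def]
  have h2Q : (∑ j, a j * d j) = 2 * Qn := by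
    have hh : (∑ j, a j * d j) = ∑ i, ∑ j, (fun i j => a i * γ i j * a j) i j := by
      rw [Finset.sum_comm]
      refine Finset.sum_congr rfl fun j _ => ?_
      rw [hd_def, Finset.mul_sum]
      exact Finset.sum_congr rfl fun i _ => by ring
    rw [hh, sum_sum_split (fun i j => a i * γ i j * a j)
      (fun i j => by
        show a i * γ i j * a j = a j * γ j i * a i
        rw [hγsym i j]; ring)]
    simp [hγdiag, hQn_def]
  have hW4 : (∑ j, a j * (d j % 2)) ≡ 2 * (Cn + Qn) [MOD 4] := by
    calc (∑ j, a j * (d j % 2)) ≡ (∑ j, a j * d j) + 2 * Cn [MOD 4] := step1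
      _ = 2 * (Cn + Qn) := by rw [h2Q]; ring
  have hCz : (∑ i, ∑ j, ∑ k, if j < k then x i * (x j * zr i j) * (x k * zr i k) else 0 : ZMod 2)
      = ((Cn : ℕ) : ZMod 2) := by
    rw [hCn_def]
    simp only [hc_def]
    push_cast [hback, hγback]
    refine Finset.sum_congr rfl fun i _ => ?_
    rw [Finset.mul_sum]
    refine Finset.sum_congr rfl fun j _ => ?_
    rw [Finset.mul_sum]
    refine Finset.sum_congr rfl fun k _ => ?_
    rw [mul_ite, mul_zero]
    refine if_congr Iff.rfl ?_ rfl
    rw [hsym j i, hsym k i]; ring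
  have hQz : (∑ i, ∑ j, if i < j then x i * zr i j * x j else 0 : ZMod 2)
      = ((Qn : ℕ) : ZMod 2) := by
    rw [hQn_def]; push_cast [hback, hγback]; rfl
  rw [hCz, hQz, ← Nat.cast_add, ZMod.val_natCast]
  have hWsum : (∑ j, (x j).val * (∑ i, x i * zr i j).val) = ∑ j, a j * (d j % 2) :=
    Finset.sum_congr rfl fun j _ => by rw [hZv j]
  rw [hWsum, I_pow_mod]
  have hmod : (∑ j, a j * (d j % 2)) % 4 = 2 * ((Cn + Qn) % 2) := by
    have := hW4; unfold Nat.ModEq at this; omega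
  rw [hmod, pow_mul, Complex.I_sq]

lemma sign_identity (n : ℕ) (zr : Fin n → Fin n → ZMod 2)
    (hsym : ∀ i j, zr i j = zr j i) (hdiag : ∀ i, zr i i = 0)
    (x b : Fin n → ZMod 2) :
    (∏ i, chi (x i * ∑ j, zr i j * ((b + ∑ k ∈ Finset.Ioi i, Pi.single k (x k)) j)))
      = (-1 : ℂ) ^ ((∑ i, ∑ j, ∑ k,
            if j < k then x i * (x j * zr i j) * (x k * zr i k) else 0 : ZMod 2)).val *
        ((∏ j, Complex.I ^ ((x j).val * (∑ i, x i * zr i j).val)) *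
          ∏ j, (-1 : ℂ) ^ ((∑ i, x i * zr i j).val * (b j).val)) := by
  set Cz : ZMod 2 := ∑ i, ∑ j, ∑ k,
    if j < k then x i * (x j * zr i j) * (x k * zr i k) else 0 with hCz_def
  set Qz : ZMod 2 := ∑ i, ∑ j, if i < j then x i * zr i j * x j else 0 with hQz_def
  set Az : ZMod 2 := ∑ i, ∑ j, x i * (zr i j * b j) with hAz_def
  have ht : ∀ i j : Fin n,
      (b + ∑ k ∈ Finset.Ioi i, Pi.single k (x k)) j = b j + if i < j then x j else 0 := by
    intro i j
    have h1 : (∑ k ∈ Finset.Ioi i, Pi.single k (x k)) j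
        = ∑ k ∈ Finset.Ioi i, (if j = k then x k else 0 : ZMod 2) := by
      rw [Finset.sum_apply]
      exact Finset.sum_congr rfl fun k _ => Pi.single_apply k (x k) j
    rw [Pi.add_apply, h1, Finset.sum_ite_eq]
    simp [Finset.mem_Ioi]
  -- left side equals chi (Az + Qz)
  have hL : (∏ i, chi (x i * ∑ j, zr i j * ((b + ∑ k ∈ Finset.Ioi i, Pi.single k (x k)) j)))
      = chi (Az + Qz) := by
    rw [← chi_sum]
    congr 1
    rw [hAz_def, hQz_def, ← Finset.sum_add_distrib]
    refine Finset.sum_congr rfl fun i _ => ?_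
    rw [Finset.mul_sum, ← Finset.sum_add_distrib]
    refine Finset.sum_congr rfl fun j _ => ?_
    rw [ht i j]
    split_ifs with h <;> ring
  -- right side pieces
  have hIW : (∏ j, Complex.I ^ ((x j).val * (∑ i, x i * zr i j).val))
      = Complex.I ^ (∑ j, (x j).val * (∑ i, x i * zr i j).val) :=
    Finset.prod_pow_eq_pow_sum _ _ _
  have hB : (∏ j, (-1 : ℂ) ^ ((∑ i, x i * zr i j).val * (b j).val)) = chi Az := by
    have h1 : (∏ j, (-1 : ℂ) ^ ((∑ i, x i * zr i j).val * (b j).val))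
        = ∏ j, chi ((∑ i, x i * zr i j) * b j) := by
      refine Finset.prod_congr rfl fun j _ => ?_
      rw [chi, zmod2_val_mul]
    rw [h1, ← chi_sum]
    congr 1
    rw [hAz_def, Finset.sum_comm]
    refine Finset.sum_congr rfl fun i _ => ?_
    rw [Finset.sum_mul]
    exact Finset.sum_congr rfl fun j _ => by ring
  rw [hL, hIW, hB, core n zr hsym hdiag x]
  show chi (Az + Qz) = chi Cz * (chi (Cz + Qz) * chi Az)
  rw [← chi_add, ← chi_add]
  congr 1
  have h2 : Cz + Cz = 0 := by
    have : (2 : ZMod 2) = 0 := by decide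
    calc Cz + Cz = 2 * Cz := by ring
      _ = 0 := by rw [this, zero_mul]
  calc Az + Qz = (Cz + Cz) + (Az + Qz) := by rw [h2, zero_add]
    _ = Cz + (Cz + Qz + Az) := by ring


/-- The parity function of the graph state associated to a graph `H`, with the
standard generators `g_i = X_i Π_{j ∈ N(i)} Z_j`, equals
`c_H(x) = Σ_{i ∈ V} Σ_{j<k, j,k ∈ N(i)} x_i x_j x_k (mod 2)`: the stabilizer
`M(x) = Π_i g_i^{x_i}` equals `(−1)^{c_H(x)}` times the unsigned Pauli string
`σ_{v_x}` (the quadratic contributions `Γ(x)` cancel by symmetry of the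
adjacency matrix `Γ`). -/
theorem stmt16 (n : ℕ) (G : SimpleGraph (Fin n)) [DecidableRel G.Adj]
    (g : Fin n → Matrix (Fin n → ZMod 2) (Fin n → ZMod 2) ℂ)
    (hg : ∀ i, g i = pauli n (Pi.single i 1) (fun j => if G.Adj i j then 1 else 0))
    (cH : (Fin n → ZMod 2) → ZMod 2)
    (hcH : ∀ x, cH x = ∑ i : Fin n, ∑ j : Fin n, ∑ k : Fin n,
      if j < k ∧ G.Adj i j ∧ G.Adj i k then x i * x j * x k else 0) :
    ∀ x : Fin n → ZMod 2,
      (List.ofFn fun i => g i ^ (x i).val).prod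
        = ((-1 : ℂ) ^ (cH x).val) •
            pauli n x (fun j => ∑ i, x i * (if G.Adj i j then 1 else 0)) := by
  intro x
  classical
  set zr : Fin n → Fin n → ZMod 2 := fun i j => if G.Adj i j then 1 else 0 with hzr
  have hrw : ∀ i j : Fin n, (if G.Adj i j then (1 : ZMod 2) else 0) = zr i j := fun i j => rfl
  have hs : ∀ i j, zr i j = zr j i := fun i j => if_congr (G.adj_comm i j) rfl rfl
  have hd : ∀ i, zr i i = 0 := fun i => by simp [hzr]
  set P : Fin n → ((Fin n → ZMod 2) × ((Fin n → ZMod 2) → ℂ)) :=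
    fun i => (Pi.single i (x i), fun c => chi (x i * ∑ j, zr i j * c j)) with hP
  have hgen : ∀ i, g i ^ (x i).val = Dmat n (P i).1 (P i).2 := by
    intro i
    rcases zmod2_cases (x i) with h | h
    · rw [h, show ((0 : ZMod 2)).val = 0 from rfl, pow_zero, ← Dmat_one n]
      simp only [hP]
      rw [h, Pi.single_zero]
      exact congrArg (Dmat n 0) (funext fun c => by rw [zero_mul, chi_zero])
    · rw [show (x i).val = 1 by rw [h]; rfl, pow_one, hg i, pauli_eq_Dmat]
      simp only [hP, hrw]
      rw [h]
      refine congrArg (Dmat n (Pi.single i 1)) (funext fun c => ?_)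
      have h1 : (∏ j, Complex.I ^ (((Pi.single i 1 : Fin n → ZMod 2) j).val * (zr i j).val)) = 1 := by
          refine Finset.prod_eq_one fun j _ => ?_
          rcases eq_or_ne j i with hj | hj
          · subst hj; rw [hd j, show ((0 : ZMod 2)).val = 0 from rfl, mul_zero, pow_zero]
          · rw [Pi.single_apply, if_neg hj, show ((0 : ZMod 2)).val = 0 from rfl, zero_mul,
              pow_zero]
      rw [h1, one_mul, one_mul, chi_sum]
      exact (Finset.prod_congr rfl fun j _ => by rw [chi, zmod2_val_mul]).symm
  have hlist : (List.ofFn fun i => g i ^ (x i).val)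
      = (List.ofFn P).map (fun p => Dmat n p.1 p.2) := by
    rw [List.map_ofFn]
    exact congrArg List.ofFn (funext hgen)
  have hx : ((List.ofFn P).map Prod.fst).sum = x := by
    rw [List.map_ofFn, List.sum_ofFn]
    exact Finset.univ_sum_single x
  have hcz : cH x = ∑ i, ∑ j, ∑ k,
      if j < k then x i * (x j * zr i j) * (x k * zr i k) else 0 := by
    rw [hcH x]
    refine Finset.sum_congr rfl fun i _ => Finset.sum_congr rfl fun j _ =>
      Finset.sum_congr rfl fun k _ => ?_
    by_cases hjk : j < k
    · by_cases h1 : G.Adj i j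
      · by_cases h2 : G.Adj i k
        · simp only [hzr, hjk, h1, h2, if_true, and_self, true_and]
          ring
        · simp [hzr, hjk, h1, h2]
      · simp [hzr, hjk, h1]
    · simp [hjk]
  simp only [hrw]
  rw [hlist, Dmat_list_prod, hx, pauli_eq_Dmat, Dmat_smul]
  refine congrArg (Dmat n x) (funext fun b => ?_)
  rw [signProd_ofFn]
  simp only [hcz]
  exact sign_identity n zr hs hd x b
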